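/- Let τ > 0 and ε ∈ (0, 1/2] satisfy Σ_{n∈ℤ, n≠0} exp(−π n² τ²) ≤ ε. For z ∈ [0,1), let μ_z be the probability measure on ℝ supported on ℤ + z that assigns to the point n + z (n ∈ ℤ) mass exp(−π(n+z)²/τ²) / Σ_{m∈ℤ} exp(−π(m+z)²/τ²), and let μ be the mixture measure μ(A) = ∫_{[0,1)} μ_z(A) dz for measurable A ⊆ ℝ. Then μ is a probability measure on ℝ, and the total variation distance between μ and the Gaussian probability measure on ℝ with density x ↦ exp(−πx²/τ²)/τ is at most 4ε. (In words: sampling z uniformly from [0,1) and then outputting a discrete Gaussian of width τ on the coset ℤ + z produces an output y with y ≡ z (mod 1) whose marginal distribution is within statistical distance 4ε of the continuous Gaussian D_τ.) -/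

import Mathlib

/-!
By Poisson summation, `θ(z) = ∑ₘ exp(-π(m+z)²/τ²) = τ ∑ₙ exp(-πn²τ²) e^{-2πinz}`, so the
smoothing condition gives `|θ(z) - τ| ≤ τε` for every `z`. As `θ` is `1`-periodic, the mixture `μ`
has Lebesgue density `exp(-πx²/τ²) / θ(x)`, which lies between `(1 + ε)⁻¹` and `1 + 2ε` times the
density `exp(-πx²/τ²) / τ` of `D_τ`. For probability measures such multiplicative bounds
`μ ≤ (1 + δ) ν` turn into additive ones `μ A ≤ ν A + δ`.
-/

open Real MeasureTheory Set
open scoped ENNReal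

noncomputable def periodizedGaussian (τ z : ℝ) : ℝ :=
  ∑' m : ℤ, Real.exp (-π * ((m : ℝ) + z) ^ 2 / τ ^ 2)

lemma summable_exp_neg_pi_mul_int_add_sq_mul {t : ℝ} (ht : 0 < t) (a : ℝ) :
    Summable fun n : ℤ => Real.exp (-π * ((n : ℝ) + a) ^ 2 * t) :=
  (HurwitzKernelBounds.summable_f_int 0 a ht).congr fun n => by
    simp [HurwitzKernelBounds.f_int, mul_assoc]

lemma summable_exp_neg_pi_mul_int_add_sq_div {τ : ℝ} (hτ : τ ≠ 0) (z : ℝ) :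
    Summable fun m : ℤ => Real.exp (-π * ((m : ℝ) + z) ^ 2 / τ ^ 2) := by
  simpa only [div_eq_mul_inv] using
    summable_exp_neg_pi_mul_int_add_sq_mul (by positivity) z

lemma periodizedGaussian_pos {τ : ℝ} (hτ : τ ≠ 0) (z : ℝ) : 0 < periodizedGaussian τ z :=
  (summable_exp_neg_pi_mul_int_add_sq_div hτ z).tsum_pos (fun _ => (exp_pos _).le) 0 (exp_pos _)

lemma periodizedGaussian_intCast_add (τ : ℝ) (n : ℤ) (z : ℝ) :
    periodizedGaussian τ (n + z) = periodizedGaussian τ z := by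
  unfold periodizedGaussian
  simpa only [Equiv.coe_addRight, Int.cast_add, add_assoc] using
    (Equiv.addRight n).tsum_eq fun m : ℤ => Real.exp (-π * ((m : ℝ) + z) ^ 2 / τ ^ 2)

lemma measurable_periodizedGaussian (τ : ℝ) : Measurable (periodizedGaussian τ) :=
  Measurable.tsum fun _ => by fun_prop

lemma tsum_ofReal_exp_div_periodizedGaussian {τ : ℝ} (hτ : τ ≠ 0) (z : ℝ) :
    ∑' n : ℤ, ENNReal.ofReal
      (Real.exp (-π * ((n : ℝ) + z) ^ 2 / τ ^ 2) / periodizedGaussian τ (n + z)) = 1 := by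
  simp_rw [periodizedGaussian_intCast_add]
  rw [← ENNReal.ofReal_tsum_of_nonneg
      (fun n => div_nonneg (exp_pos _).le (periodizedGaussian_pos hτ z).le)
      ((summable_exp_neg_pi_mul_int_add_sq_div hτ z).div_const _), tsum_div_const,
    ← periodizedGaussian, div_self (periodizedGaussian_pos hτ z).ne', ENNReal.ofReal_one]

lemma ofReal_periodizedGaussian {τ : ℝ} (hτ : 0 < τ) (z : ℝ) :
    (periodizedGaussian τ z : ℂ) =
      τ * ∑' n : ℤ, Complex.exp (-π * τ ^ 2 * n ^ 2 - 2 * π * Complex.I * z * n) := by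
  have hτ' : (τ : ℂ) ≠ 0 := by exact_mod_cast hτ.ne'
  have hsqrt : ((τ : ℂ) ^ 2) ^ (1 / 2 : ℂ) = τ := by
    rw [← Complex.cpow_natCast, ← Complex.cpow_mul] <;>
      simp [Complex.log_im, Complex.arg_ofReal_of_nonneg hτ.le, pi_pos, pi_pos.le]
  have key := Complex.tsum_exp_neg_quadratic (a := ((τ ^ 2 : ℝ) : ℂ))
    (by rw [Complex.ofReal_re]; positivity) (-(Complex.I * z))
  have hIz : Complex.I * -(Complex.I * z) = z := by
    rw [mul_neg, ← mul_assoc, Complex.I_mul_I, neg_one_mul, neg_neg]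
  push_cast at key
  rw [hsqrt, hIz] at key
  rw [periodizedGaussian, Complex.ofReal_tsum]
  calc ∑' m : ℤ, ((rexp (-π * (m + z) ^ 2 / τ ^ 2) : ℝ) : ℂ)
      = τ * (1 / τ * ∑' n : ℤ, Complex.exp (-π / τ ^ 2 * (n + z) ^ 2)) := by
        rw [← mul_assoc, mul_one_div_cancel hτ', one_mul]
        exact tsum_congr fun m => by push_cast; ring_nf
    _ = _ := by
        rw [← key]
        exact congrArg _ (tsum_congr fun n => by ring_nf)

lemma abs_periodizedGaussian_sub_le {τ : ℝ} (hτ : 0 < τ) (z : ℝ) :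
    |periodizedGaussian τ z - τ| ≤
      τ * ∑' n : {n : ℤ // n ≠ 0}, Real.exp (-π * ((n : ℤ) : ℝ) ^ 2 * τ ^ 2) := by
  set c : ℤ → ℂ := fun n => Complex.exp (-π * τ ^ 2 * n ^ 2 - 2 * π * Complex.I * z * n)
  have hnorm : ∀ n : ℤ, ‖c n‖ = Real.exp (-π * (n : ℝ) ^ 2 * τ ^ 2) := fun n => by
    rw [Complex.norm_exp]
    congr 1
    simp [← Complex.ofReal_pow, ← Complex.ofReal_intCast]
    ring
  have hc : Summable c := .of_norm <| by
    simpa only [hnorm, add_zero] using summable_exp_neg_pi_mul_int_add_sq_mul (pow_pos hτ 2) 0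
  have hsplit : ∑' n, c n = 1 + ∑' n : {n : ℤ // n ≠ 0}, c n := by
    rw [← hc.tsum_subtype_add_tsum_subtype_compl {0}, tsum_singleton]
    simp only [c, Int.cast_zero, zero_pow two_ne_zero, mul_zero, sub_zero, Complex.exp_zero]
    rfl
  have hdiff : ((periodizedGaussian τ z - τ : ℝ) : ℂ) = τ * ∑' n : {n : ℤ // n ≠ 0}, c n := by
    rw [Complex.ofReal_sub, ofReal_periodizedGaussian hτ, hsplit]
    ring
  calc |periodizedGaussian τ z - τ| = τ * ‖∑' n : {n : ℤ // n ≠ 0}, c n‖ := by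
        rw [← Real.norm_eq_abs, ← Complex.norm_real, hdiff, norm_mul, Complex.norm_real,
          norm_of_nonneg hτ.le]
    _ ≤ τ * ∑' n : {n : ℤ // n ≠ 0}, ‖c n‖ := by
        gcongr
        exact norm_tsum_le_tsum_norm (hc.norm.subtype _)
    _ = _ := by simp only [hnorm]

lemma setLIntegral_Ico_intCast_add_one (n : ℤ) (F : ℝ → ℝ≥0∞) :
    ∫⁻ x in Ico (n : ℝ) (n + 1), F x = ∫⁻ z in Ico 0 1, F (n + z) := by
  rw [(measurePreserving_add_left volume (n : ℝ)).setLIntegral_comp_emb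
    (measurableEmbedding_addLeft _), image_const_add_Ico, add_zero]

lemma lintegral_eq_setLIntegral_Ico_tsum {F : ℝ → ℝ≥0∞} (hF : Measurable F) :
    ∫⁻ x, F x = ∫⁻ z in Ico (0 : ℝ) 1, ∑' n : ℤ, F (n + z) := by
  rw [← setLIntegral_univ, ← iUnion_Ico_intCast ℝ,
    lintegral_iUnion (fun _ => measurableSet_Ico) (pairwise_disjoint_Ico_intCast ℝ),
    lintegral_tsum (f := fun (n : ℤ) z => F (n + z)) fun n =>
      (hF.comp (measurable_const_add _)).aemeasurable]
  exact tsum_congr fun n => setLIntegral_Ico_intCast_add_one n F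

lemma sum_smul_dirac_intCast_add_apply (f : ℝ → ℝ≥0∞) (z : ℝ) {A : Set ℝ}
    (hA : MeasurableSet A) :
    Measure.sum (fun n : ℤ => f (n + z) • Measure.dirac ((n : ℝ) + z)) A =
      ∑' n : ℤ, A.indicator f (n + z) := by
  rw [Measure.sum_apply _ hA]
  refine tsum_congr fun n => ?_
  rw [Measure.smul_apply, Measure.dirac_apply' _ hA, smul_eq_mul, ← indicator_mul_right]
  simp only [Pi.one_apply, mul_one]

lemma bind_sum_smul_dirac_intCast_add {f : ℝ → ℝ≥0∞} (hf : Measurable f) :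
    (volume.restrict (Ico (0 : ℝ) 1)).bind
        (fun z => Measure.sum fun n : ℤ => f (n + z) • Measure.dirac ((n : ℝ) + z)) =
      volume.withDensity f := by
  have hmeas : Measurable fun z : ℝ =>
      Measure.sum fun n : ℤ => f (n + z) • Measure.dirac ((n : ℝ) + z) :=
    Measure.measurable_of_measurable_coe _ fun A hA => by
      simp_rw [sum_smul_dirac_intCast_add_apply f _ hA]
      exact Measurable.tsum fun n => (hf.indicator hA).comp (measurable_const_add _)
  ext A hA
  rw [Measure.bind_apply hA hmeas.aemeasurable, withDensity_apply _ hA, ← lintegral_indicator hA,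
    lintegral_eq_setLIntegral_Ico_tsum (hf.indicator hA)]
  simp_rw [sum_smul_dirac_intCast_add_apply f _ hA]

lemma isProbabilityMeasure_withDensity_of_tsum_intCast_add {f : ℝ → ℝ≥0∞} (hf : Measurable f)
    (h : ∀ z, ∑' n : ℤ, f (n + z) = 1) : IsProbabilityMeasure (volume.withDensity f) := by
  constructor
  rw [withDensity_apply _ .univ, Measure.restrict_univ, lintegral_eq_setLIntegral_Ico_tsum hf]
  simp [h]

lemma isProbabilityMeasure_withDensity_gaussian {τ : ℝ} (hτ : 0 < τ) :
    IsProbabilityMeasure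
      (volume.withDensity fun x => ENNReal.ofReal (Real.exp (-π * x ^ 2 / τ ^ 2) / τ)) := by
  have hform : ∀ x : ℝ, -π * x ^ 2 / τ ^ 2 = -(π / τ ^ 2) * x ^ 2 := fun x => by ring
  constructor
  simp_rw [withDensity_apply _ MeasurableSet.univ, Measure.restrict_univ, hform]
  rw [← ofReal_integral_eq_lintegral_ofReal
      ((integrable_exp_neg_mul_sq (by positivity)).div_const τ) (ae_of_all _ fun x => by positivity),
    integral_div, integral_gaussian, div_div_cancel₀ pi_ne_zero, sqrt_sq hτ.le, div_self hτ.ne',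
    ENNReal.ofReal_one]

lemma div_le_one_add_two_mul_mul_div_of_abs_sub_le {g θ τ ε : ℝ} (hg : 0 ≤ g) (hτ : 0 < τ)
    (hε : 0 ≤ ε) (hε2 : ε ≤ 1 / 2) (h : |θ - τ| ≤ τ * ε) :
    g / θ ≤ (1 + 2 * ε) * (g / τ) := by
  have hθ : τ * (1 - ε) ≤ θ := by linarith [neg_abs_le (θ - τ)]
  have hθ0 : 0 < θ := lt_of_lt_of_le (by nlinarith) hθ
  rw [mul_div_assoc', div_le_div_iff₀ hθ0 hτ]
  nlinarith [mul_le_mul_of_nonneg_left hθ (by positivity : 0 ≤ (1 + 2 * ε) * g),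
    mul_nonneg (mul_nonneg hg hτ.le) (mul_nonneg hε (by linarith : (0 : ℝ) ≤ 1 - 2 * ε))]

lemma div_le_one_add_mul_mul_div_of_abs_sub_le {g θ τ ε : ℝ} (hg : 0 ≤ g) (hτ : 0 < τ)
    (hθ : 0 < θ) (h : |θ - τ| ≤ τ * ε) :
    g / τ ≤ (1 + ε) * (g / θ) := by
  rw [mul_div_assoc', div_le_div_iff₀ hτ hθ]
  nlinarith [le_abs_self (θ - τ)]

lemma withDensity_ofReal_le_smul {α : Type*} [MeasurableSpace α] {μ : Measure α}
    {f h : α → ℝ} {c : ℝ} (hc : 0 ≤ c) (hfh : ∀ x, f x ≤ c * h x) :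
    μ.withDensity (fun x => ENNReal.ofReal (f x)) ≤
      ENNReal.ofReal c • μ.withDensity (fun x => ENNReal.ofReal (h x)) := by
  rw [← withDensity_smul' _ _ ENNReal.ofReal_ne_top]
  refine withDensity_mono (ae_of_all _ fun x => ?_)
  simp only [Pi.smul_apply, smul_eq_mul, ← ENNReal.ofReal_mul hc]
  exact ENNReal.ofReal_le_ofReal (hfh x)

lemma apply_le_add_of_le_ofReal_one_add_smul {α : Type*} [MeasurableSpace α] {μ ν : Measure α}
    [IsProbabilityMeasure ν] {δ : ℝ} (hδ : 0 ≤ δ) (h : μ ≤ ENNReal.ofReal (1 + δ) • ν)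
    (s : Set α) : μ s ≤ ν s + ENNReal.ofReal δ :=
  calc μ s ≤ ENNReal.ofReal (1 + δ) * ν s := h s
    _ = ν s + ENNReal.ofReal δ * ν s := by
        rw [ENNReal.ofReal_add zero_le_one hδ, ENNReal.ofReal_one, add_mul, one_mul]
    _ ≤ ν s + ENNReal.ofReal δ := by gcongr; exact mul_le_of_le_one_right' prob_le_one

/-- Gaussian preimage sampling: if `τ` exceeds the smoothing parameter `η_ε(ℤ)` (i.e.
`Σ_{n ≠ 0} e^{-πn²τ²} ≤ ε` with `ε ∈ (0,1/2]`), then sampling `z` uniformly from `[0,1)`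
and then a discrete Gaussian of width `τ` on the coset `ℤ + z` produces a probability
distribution within total variation distance `4ε` of the continuous Gaussian `D_τ`. -/
theorem stmt_17 (τ ε : ℝ) (hτ : 0 < τ) (hε : 0 < ε) (hε2 : ε ≤ 1 / 2)
    (hsm : ∑' n : {n : ℤ // n ≠ 0}, Real.exp (-π * ((n : ℤ) : ℝ) ^ 2 * τ ^ 2) ≤ ε) :
    let θ : ℝ → ℝ := fun z => ∑' m : ℤ, Real.exp (-π * ((m : ℝ) + z) ^ 2 / τ ^ 2)
    let μz : ℝ → Measure ℝ := fun z =>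
      Measure.sum fun n : ℤ =>
        ENNReal.ofReal (Real.exp (-π * ((n : ℝ) + z) ^ 2 / τ ^ 2) / θ z) •
          Measure.dirac ((n : ℝ) + z)
    let μ : Measure ℝ := (volume.restrict (Set.Ico (0 : ℝ) 1)).bind μz
    let ν : Measure ℝ :=
      volume.withDensity fun x => ENNReal.ofReal (Real.exp (-π * x ^ 2 / τ ^ 2) / τ)
    IsProbabilityMeasure μ ∧
      ∀ A : Set ℝ, MeasurableSet A →
        μ A ≤ ν A + ENNReal.ofReal (4 * ε) ∧ ν A ≤ μ A + ENNReal.ofReal (4 * ε) := by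
  intro θ μz μ ν
  have hclose (z : ℝ) : |periodizedGaussian τ z - τ| ≤ τ * ε :=
    (abs_periodizedGaussian_sub_le hτ z).trans (by gcongr)
  have hdens : Measurable fun x => ENNReal.ofReal
      (Real.exp (-π * x ^ 2 / τ ^ 2) / periodizedGaussian τ x) := by
    have := measurable_periodizedGaussian τ
    fun_prop
  have hμ : μ = volume.withDensity fun x => ENNReal.ofReal
      (Real.exp (-π * x ^ 2 / τ ^ 2) / periodizedGaussian τ x) := by
    rw [← bind_sum_smul_dirac_intCast_add hdens]
    simp only [periodizedGaussian_intCast_add]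
    rfl
  have hμν : μ ≤ ENNReal.ofReal (1 + 2 * ε) • ν := hμ ▸ withDensity_ofReal_le_smul
    (by linarith) fun x => div_le_one_add_two_mul_mul_div_of_abs_sub_le (by positivity) hτ hε.le
      hε2 (hclose x)
  have hνμ : ν ≤ ENNReal.ofReal (1 + ε) • μ := hμ ▸ withDensity_ofReal_le_smul
    (by linarith) fun x => div_le_one_add_mul_mul_div_of_abs_sub_le (by positivity) hτ
      (periodizedGaussian_pos hτ.ne' x) (hclose x)
  have hμ_prob : IsProbabilityMeasure μ := hμ ▸
    isProbabilityMeasure_withDensity_of_tsum_intCast_add hdens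
      (tsum_ofReal_exp_div_periodizedGaussian hτ.ne')
  have : IsProbabilityMeasure ν := isProbabilityMeasure_withDensity_gaussian hτ
  refine ⟨hμ_prob, fun A _ => ⟨?_, ?_⟩⟩
  · calc μ A ≤ ν A + ENNReal.ofReal (2 * ε) :=
          apply_le_add_of_le_ofReal_one_add_smul (by positivity) hμν A
      _ ≤ ν A + ENNReal.ofReal (4 * ε) := by gcongr; linarith
  · calc ν A ≤ μ A + ENNReal.ofReal ε := apply_le_add_of_le_ofReal_one_add_smul hε.le hνμ A
      _ ≤ μ A + ENNReal.ofReal (4 * ε) := by gcongr; linarith
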